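/- arXiv:math/0412381 — 2 statements merged into one kernel-verified Lean document; each statement's English description precedes it below -/
import Mathlib

section
/- Let u be a smooth mean-zero real function on the circle and suppose v, ṽ are smooth mean-zero functions with v_x + v^2 - P_0(v^2) = ṽ_x + ṽ^2 - P_0(ṽ^2) = u. Then v = ṽ. -/
/-- Injectivity of the Miura transform `M(v) = v_x + v² - P₀(v²)` on smooth mean-zero
periodic functions: if `M(v) = M(w) = u` then `v = w`. -/
theorem miura_injective
    (u v w : ℝ → ℝ)
    (hu : ContDiff ℝ (⊤ : ℕ∞) u) (hv : ContDiff ℝ (⊤ : ℕ∞) v) (hw : ContDiff ℝ (⊤ : ℕ∞) w)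
    (huper : ∀ x, u (x + 2 * Real.pi) = u x)
    (hvper : ∀ x, v (x + 2 * Real.pi) = v x)
    (hwper : ∀ x, w (x + 2 * Real.pi) = w x)
    (humean : ∫ x in (0:ℝ)..(2 * Real.pi), u x = 0)
    (hvmean : ∫ x in (0:ℝ)..(2 * Real.pi), v x = 0)
    (hwmean : ∫ x in (0:ℝ)..(2 * Real.pi), w x = 0)
    (hMv : ∀ x, deriv v x + (v x) ^ 2 -
        (1 / (2 * Real.pi)) * (∫ y in (0:ℝ)..(2 * Real.pi), (v y) ^ 2) = u x)
    (hMw : ∀ x, deriv w x + (w x) ^ 2 -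
        (1 / (2 * Real.pi)) * (∫ y in (0:ℝ)..(2 * Real.pi), (w y) ^ 2) = u x) :
    v = w := by
  have hπ : (0:ℝ) < 2 * Real.pi := by positivity
  have hvc : Continuous v := hv.continuous
  have hwc : Continuous w := hw.continuous
  have hvd : Differentiable ℝ v := hv.differentiable (by simp)
  have hwd : Differentiable ℝ w := hw.differentiable (by simp)
  set p : ℝ → ℝ := fun x => v x + w x with hp_def
  have hpc : Continuous p := hvc.add hwc
  set d : ℝ → ℝ := fun x => v x - w x with hd_def
  have hdc : Continuous d := hvc.sub hwc
  have hdd : Differentiable ℝ d := hvd.sub hwd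
  set κ : ℝ := (1 / (2 * Real.pi)) * (∫ y in (0:ℝ)..(2 * Real.pi), (v y) ^ 2)
      - (1 / (2 * Real.pi)) * (∫ y in (0:ℝ)..(2 * Real.pi), (w y) ^ 2) with hκ_def
  -- the linear ODE satisfied by d
  have hODE : ∀ x, deriv d x + p x * d x = κ := by
    intro x
    have hdd' : deriv d x = deriv v x - deriv w x := by
      exact deriv_sub (hvd x) (hwd x)
    have h1 := hMv x
    have h2 := hMw x
    simp only [hd_def, hp_def, hκ_def, hdd']
    nlinarith [h1, h2]
  -- antiderivative of p
  set F : ℝ → ℝ := fun x => ∫ t in (0:ℝ)..x, p t with hF_def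
  have hFderiv : ∀ x, HasDerivAt F (p x) x := fun x =>
    intervalIntegral.integral_hasDerivAt_right
      (hpc.intervalIntegrable _ _)
      (hpc.stronglyMeasurable.stronglyMeasurableAtFilter)
      hpc.continuousAt
  have hFdiff : Differentiable ℝ F := fun x => (hFderiv x).differentiableAt
  have hFcont : Continuous F := hFdiff.continuous
  -- p is periodic with mean zero, so F is periodic
  have hpper : Function.Periodic p (2 * Real.pi) := fun x => by
    simp [hp_def, hvper x, hwper x]
  have hpmean : ∫ t in (0:ℝ)..(2 * Real.pi), p t = 0 := by
    have : ∫ t in (0:ℝ)..(2 * Real.pi), p t =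
        (∫ t in (0:ℝ)..(2 * Real.pi), v t) + ∫ t in (0:ℝ)..(2 * Real.pi), w t :=
      intervalIntegral.integral_add (hvc.intervalIntegrable _ _) (hwc.intervalIntegrable _ _)
    rw [this, hvmean, hwmean, add_zero]
  have hFper : ∀ x, F (x + 2 * Real.pi) = F x := by
    intro x
    have h1 := intervalIntegral.integral_add_adjacent_intervals (μ := MeasureTheory.volume)
      (hpc.intervalIntegrable 0 x) (hpc.intervalIntegrable x (x + 2 * Real.pi))
    have h2 : (∫ t in x..(x + 2 * Real.pi), p t) = ∫ t in (0:ℝ)..(0 + 2 * Real.pi), p t :=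
      hpper.intervalIntegral_add_eq x 0
    have h3 : (∫ t in x..(x + 2 * Real.pi), p t) = 0 := by
      rw [h2, zero_add, hpmean]
    simp only [hF_def]
    rw [← h1, h3, add_zero]
  -- the function g = exp(F) * d
  set g : ℝ → ℝ := fun x => Real.exp (F x) * d x with hg_def
  have hgderiv : ∀ x, HasDerivAt g (κ * Real.exp (F x)) x := by
    intro x
    have h1 : HasDerivAt (fun y => Real.exp (F y)) (Real.exp (F x) * p x) x :=
      (hFderiv x).exp
    have h2 := h1.mul ((hdd x).hasDerivAt)
    have e : Real.exp (F x) * p x * d x + Real.exp (F x) * deriv d x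
        = κ * Real.exp (F x) := by
      rw [← hODE x]; ring
    exact e ▸ h2
  have hgper : ∀ x, g (x + 2 * Real.pi) = g x := by
    intro x
    simp [hg_def, hd_def, hFper x, hvper x, hwper x]
  have hEcont : Continuous fun x => Real.exp (F x) := Real.continuous_exp.comp hFcont
  -- FTC : g(2π) - g(0) = κ * ∫ exp(F)
  have hFTC : g (2 * Real.pi) - g 0
      = κ * ∫ t in (0:ℝ)..(2 * Real.pi), Real.exp (F t) := by
    have := intervalIntegral.integral_eq_sub_of_hasDerivAt
      (f := g) (f' := fun x => κ * Real.exp (F x)) (a := (0:ℝ)) (b := 2 * Real.pi)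
      (fun x _ => hgderiv x) ((continuous_const.mul hEcont).intervalIntegrable _ _)
    rw [← this, intervalIntegral.integral_const_mul]
  have hEpos : (0:ℝ) < ∫ t in (0:ℝ)..(2 * Real.pi), Real.exp (F t) :=
    intervalIntegral.intervalIntegral_pos_of_pos (hEcont.intervalIntegrable _ _)
      (fun x => Real.exp_pos _) hπ
  have hκ0 : κ = 0 := by
    have h0 : g (2 * Real.pi) - g 0 = 0 := by
      have := hgper 0
      rw [zero_add] at this
      rw [this, sub_self]
    rw [h0] at hFTC
    exact (mul_eq_zero.mp hFTC.symm).resolve_right (ne_of_gt hEpos)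
  -- g is constant
  have hgconst : ∀ x, g x = g 0 := by
    intro x
    exact is_const_of_deriv_eq_zero
      (fun y => (hgderiv y).differentiableAt)
      (fun y => by rw [(hgderiv y).deriv, hκ0, zero_mul]) x 0
  have hF0 : F 0 = 0 := by simp [hF_def]
  have hg0 : g 0 = d 0 := by simp [hg_def, hF0]
  -- so d x = d 0 * exp (-F x)
  have hdx : ∀ x, d x = d 0 * Real.exp (-F x) := by
    intro x
    have h := hgconst x
    rw [hg0] at h
    have hx : d x = d 0 / Real.exp (F x) := by
      rw [eq_div_iff (Real.exp_pos _).ne']; simp only [hg_def] at h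
      linarith [h]
    rw [hx, Real.exp_neg, div_eq_mul_inv]
  -- mean zero of d forces d 0 = 0
  have hdmean : ∫ x in (0:ℝ)..(2 * Real.pi), d x = 0 := by
    have : ∫ x in (0:ℝ)..(2 * Real.pi), d x =
        (∫ x in (0:ℝ)..(2 * Real.pi), v x) - ∫ x in (0:ℝ)..(2 * Real.pi), w x :=
      intervalIntegral.integral_sub (hvc.intervalIntegrable _ _) (hwc.intervalIntegrable _ _)
    rw [this, hvmean, hwmean, sub_zero]
  have hEnegcont : Continuous fun x => Real.exp (-F x) :=
    Real.continuous_exp.comp hFcont.neg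
  have hEnegpos : (0:ℝ) < ∫ t in (0:ℝ)..(2 * Real.pi), Real.exp (-F t) :=
    intervalIntegral.intervalIntegral_pos_of_pos (hEnegcont.intervalIntegrable _ _)
      (fun x => Real.exp_pos _) hπ
  have hd0 : d 0 = 0 := by
    have : ∫ x in (0:ℝ)..(2 * Real.pi), d x
        = d 0 * ∫ t in (0:ℝ)..(2 * Real.pi), Real.exp (-F t) := by
      rw [← intervalIntegral.integral_const_mul]
      exact intervalIntegral.integral_congr fun x _ => hdx x
    rw [hdmean] at this
    exact (mul_eq_zero.mp this.symm).resolve_right (ne_of_gt hEnegpos)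
  funext x
  have := hdx x
  rw [hd0, zero_mul] at this
  have : v x - w x = 0 := this
  linarith
end

section
/- Let v be a smooth mean-zero function on the circle and let M'(v) denote the Fréchet derivative of the Miura map at v, i.e., M'(v)(w) = (1-P_0)(w_x + 2vw). Then M'(v)^{-1} = A[exp(-2∂_x^{-1}v)] ∘ ∂_x^{-1} ∘ A[exp(2∂_x^{-1}v)], where for a positive function V, A[V](w) := V w - (V/P_0(V)) P_0(V w), and ∂_x^{-1} is the mean-zero antiderivative. -/
/-- The mean `P₀ g = (1/2π) ∫₀^{2π} g` of a `2π`-periodic function. -/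
noncomputable def meanT (g : ℝ → ℝ) : ℝ :=
  (1 / (2 * Real.pi)) * ∫ x in (0:ℝ)..(2 * Real.pi), g x

/-- The mean-zero antiderivative `∂ₓ⁻¹ g` of a mean-zero periodic function `g`. -/
noncomputable def antiderivT (g : ℝ → ℝ) : ℝ → ℝ :=
  fun x => (∫ t in (0:ℝ)..x, g t) - meanT (fun y => ∫ t in (0:ℝ)..y, g t)

/-- The operator `A[V] w = V w - (V / P₀(V)) P₀(V w)`. -/
noncomputable def Aop (V w : ℝ → ℝ) : ℝ → ℝ :=
  fun x => V x * w x - (V x / meanT V) * meanT (fun y => V y * w y)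

/-- The Fréchet derivative of the Miura map at `v`: `M'(v) w = (1 - P₀)(w_x + 2 v w)`. -/
noncomputable def miuraDeriv (v w : ℝ → ℝ) : ℝ → ℝ :=
  fun x => (deriv w x + 2 * v x * w x) - meanT (fun y => deriv w y + 2 * v y * w y)

open MeasureTheory intervalIntegral Real

private lemma twopi_pos : (0:ℝ) < 2 * Real.pi := by positivity

private lemma twopi_ne : (2 * Real.pi) ≠ 0 := ne_of_gt twopi_pos

lemma meanT_const (c : ℝ) : meanT (fun _ => c) = c := by
  simp [meanT]
  field_simp

lemma meanT_sub_mul {g h : ℝ → ℝ} (c : ℝ) (hg : Continuous g) (hh : Continuous h) :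
    meanT (fun x => g x - c * h x) = meanT g - c * meanT h := by
  unfold meanT
  rw [intervalIntegral.integral_sub (g := fun x => c * h x) (hg.intervalIntegrable _ _)
    ((continuous_const.mul hh).intervalIntegrable _ _), intervalIntegral.integral_const_mul]
  ring

lemma meanT_sub_const {g : ℝ → ℝ} (c : ℝ) (hg : Continuous g) :
    meanT (fun x => g x - c) = meanT g - c := by
  have := meanT_sub_mul (g := g) (h := fun _ => (1:ℝ)) c hg continuous_const
  simpa [meanT_const] using this

lemma integral_of_meanT_zero {g : ℝ → ℝ} (h : meanT g = 0) :
    (∫ x in (0:ℝ)..(2*Real.pi), g x) = 0 := by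
  unfold meanT at h
  rcases mul_eq_zero.1 h with h1 | h2
  · exact absurd h1 (by positivity)
  · exact h2

lemma antiderivT_hasDerivAt {g : ℝ → ℝ} (hg : Continuous g) (x : ℝ) :
    HasDerivAt (antiderivT g) (g x) x := by
  have h1 : HasDerivAt (fun u => ∫ t in (0:ℝ)..u, g t) (g x) x :=
    intervalIntegral.integral_hasDerivAt_right (hg.intervalIntegrable _ _)
      hg.stronglyMeasurable.stronglyMeasurableAtFilter hg.continuousAt
  exact h1.sub_const _

lemma antiderivT_continuous {g : ℝ → ℝ} (hg : Continuous g) :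
    Continuous (antiderivT g) :=
  (Differentiable.continuous fun x => (antiderivT_hasDerivAt hg x).differentiableAt)

lemma meanT_antiderivT {g : ℝ → ℝ} (hg : Continuous g) :
    meanT (antiderivT g) = 0 := by
  have hp : Continuous (fun y => ∫ t in (0:ℝ)..y, g t) := by
    have : ∀ x : ℝ, HasDerivAt (fun u => ∫ t in (0:ℝ)..u, g t) (g x) x := fun x =>
      intervalIntegral.integral_hasDerivAt_right (hg.intervalIntegrable _ _)
        hg.stronglyMeasurable.stronglyMeasurableAtFilter hg.continuousAt
    exact Differentiable.continuous fun x => (this x).differentiableAt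
  unfold antiderivT
  rw [meanT_sub_const _ hp]
  ring

lemma antiderivT_periodic {g : ℝ → ℝ} (hg : Continuous g)
    (hper : ∀ x, g (x + 2 * Real.pi) = g x) (hmean : meanT g = 0) (x : ℝ) :
    antiderivT g (x + 2 * Real.pi) = antiderivT g x := by
  have hpg : Function.Periodic g (2 * Real.pi) := hper
  have h1 : (∫ t in (0:ℝ)..(x + 2*Real.pi), g t)
      = (∫ t in (0:ℝ)..x, g t) + ∫ t in x..(x + 2*Real.pi), g t :=
    (intervalIntegral.integral_add_adjacent_intervals (hg.intervalIntegrable _ _)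
      (hg.intervalIntegrable _ _)).symm
  have h2 : (∫ t in x..(x + 2*Real.pi), g t) = ∫ t in (0:ℝ)..(0 + 2*Real.pi), g t :=
    hpg.intervalIntegral_add_eq x 0
  have h3 : (∫ t in (0:ℝ)..(0 + 2*Real.pi), g t) = 0 := by
    rw [zero_add]; exact integral_of_meanT_zero hmean
  unfold antiderivT
  rw [h1, h2, h3]
  ring

lemma meanT_deriv_eq_zero {h h' : ℝ → ℝ} (hd : ∀ x, HasDerivAt h (h' x) x)
    (hc : Continuous h') (hper : ∀ x, h (x + 2 * Real.pi) = h x) :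
    meanT h' = 0 := by
  unfold meanT
  rw [intervalIntegral.integral_eq_sub_of_hasDerivAt (fun x _ => hd x)
    (hc.intervalIntegrable _ _)]
  have : h (2 * Real.pi) = h 0 := by
    have := hper 0; rwa [zero_add] at this
  rw [this]; ring

lemma meanT_pos {g : ℝ → ℝ} (hg : Continuous g) (hpos : ∀ x, 0 < g x) :
    0 < meanT g := by
  unfold meanT
  have := intervalIntegral.intervalIntegral_pos_of_pos
    (hg.intervalIntegrable 0 (2*Real.pi)) hpos twopi_pos
  positivity

/-- Lemma 2.2 (mv-invert): for smooth mean-zero periodic `v`, the operator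
`A[exp(-2∂ₓ⁻¹v)] ∘ ∂ₓ⁻¹ ∘ A[exp(2∂ₓ⁻¹v)]` is a two-sided inverse of `M'(v)`
on smooth mean-zero periodic functions. -/
theorem miura_linearization_inverse
    (v : ℝ → ℝ) (hv : ContDiff ℝ (⊤ : ℕ∞) v)
    (hvper : ∀ x, v (x + 2 * Real.pi) = v x)
    (hvmean : meanT v = 0) :
    (∀ f : ℝ → ℝ, ContDiff ℝ (⊤ : ℕ∞) f → (∀ x, f (x + 2 * Real.pi) = f x) → meanT f = 0 →
      miuraDeriv v
        (Aop (fun x => Real.exp (-2 * antiderivT v x))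
          (antiderivT (Aop (fun x => Real.exp (2 * antiderivT v x)) f))) = f) ∧
    (∀ w : ℝ → ℝ, ContDiff ℝ (⊤ : ℕ∞) w → (∀ x, w (x + 2 * Real.pi) = w x) → meanT w = 0 →
      Aop (fun x => Real.exp (-2 * antiderivT v x))
        (antiderivT (Aop (fun x => Real.exp (2 * antiderivT v x)) (miuraDeriv v w))) = w) := by
  have hvc : Continuous v := hv.continuous
  set φ : ℝ → ℝ := antiderivT v with hφdef
  have hφd : ∀ x, HasDerivAt φ (v x) x := fun x => antiderivT_hasDerivAt hvc x
  have hφc : Continuous φ := antiderivT_continuous hvc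
  have hφper : ∀ x, φ (x + 2 * Real.pi) = φ x := antiderivT_periodic hvc hvper hvmean
  set E : ℝ → ℝ := fun x => Real.exp (2 * φ x) with hEdef
  set F : ℝ → ℝ := fun x => Real.exp (-2 * φ x) with hFdef
  have hEd : ∀ x, HasDerivAt E (E x * (2 * v x)) x := fun x => ((hφd x).const_mul 2).exp
  have hFd : ∀ x, HasDerivAt F (F x * (-2 * v x)) x := fun x => ((hφd x).const_mul (-2)).exp
  have hEc : Continuous E := Real.continuous_exp.comp (continuous_const.mul hφc)
  have hFc : Continuous F := Real.continuous_exp.comp (continuous_const.mul hφc)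
  have hEper : ∀ x, E (x + 2 * Real.pi) = E x := fun x => by simp [hEdef, hφper x]
  have hFper : ∀ x, F (x + 2 * Real.pi) = F x := fun x => by simp [hFdef, hφper x]
  have hFE : ∀ x, F x * E x = 1 := fun x => by
    rw [hEdef, hFdef, ← Real.exp_add]; ring_nf; exact Real.exp_zero
  have hmE : 0 < meanT E := meanT_pos hEc fun x => Real.exp_pos _
  have hmF : 0 < meanT F := meanT_pos hFc fun x => Real.exp_pos _
  have hmE' : meanT E ≠ 0 := ne_of_gt hmE
  have hmF' : meanT F ≠ 0 := ne_of_gt hmF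
  constructor
  · -- forward direction
    intro f hf hfper hfmean
    have hfc : Continuous f := hf.continuous
    set cE := meanT (fun y => E y * f y) with hcEdef
    have hAopE : Aop E f = fun x => E x * f x - (cE / meanT E) * E x := by
      funext x; simp only [Aop, ← hcEdef]; ring
    have hgc : Continuous (Aop E f) := by
      rw [hAopE]; exact (hEc.mul hfc).sub (continuous_const.mul hEc)
    have hgmean : meanT (Aop E f) = 0 := by
      rw [hAopE, meanT_sub_mul (g := fun x => E x * f x) _ (hEc.mul hfc) hEc, ← hcEdef]
      field_simp
      ring
    have hgper : ∀ x, Aop E f (x + 2 * Real.pi) = Aop E f x := fun x => by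
      simp only [Aop, hEper x, hfper x]
    set h : ℝ → ℝ := antiderivT (Aop E f) with hhdef
    have hhd : ∀ x, HasDerivAt h (Aop E f x) x := fun x => antiderivT_hasDerivAt hgc x
    have hhc : Continuous h := antiderivT_continuous hgc
    set cF := meanT (fun y => F y * h y) with hcFdef
    have hAopF : Aop F h = fun x => F x * h x - (cF / meanT F) * F x := by
      funext x; simp only [Aop, ← hcFdef]; ring
    set U : ℝ → ℝ := fun x => F x * h x - (cF / meanT F) * F x with hUdef
    have hUd : ∀ x, HasDerivAt U
        (F x * (-2 * v x) * h x + F x * (Aop E f x) - (cF / meanT F) * (F x * (-2 * v x))) x :=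
      fun x => (((hFd x).mul (hhd x)).sub ((hFd x).const_mul (cF / meanT F)))
    have key : ∀ x, deriv U x + 2 * v x * U x = f x - cE / meanT E := by
      intro x
      rw [(hUd x).deriv, hAopE]
      simp only [hUdef]
      have h1 := hFE x
      linear_combination (f x - cE / meanT E) * h1
    rw [hAopF]
    funext x
    simp only [miuraDeriv]
    have hfun : (fun y => deriv U y + 2 * v y * U y) = fun y => f y - cE / meanT E :=
      funext key
    rw [hfun, key x, meanT_sub_const _ hfc, hfmean]
    ring
  · -- backward direction
    intro w hw hwper hwmean
    have hwc : Continuous w := hw.continuous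
    have hwd : ∀ x, HasDerivAt w (deriv w x) x :=
      fun x => (hw.differentiable (by simp) x).hasDerivAt
    have hw'c : Continuous (deriv w) := hw.continuous_deriv (by simp)
    set EW : ℝ → ℝ := fun x => E x * w x with hEWdef
    have hEWd : ∀ x, HasDerivAt EW (E x * (deriv w x + 2 * v x * w x)) x := by
      intro x
      have := (hEd x).mul (hwd x)
      exact this.congr_deriv (by ring)
    have hEWper : ∀ x, EW (x + 2 * Real.pi) = EW x := fun x => by
      simp only [hEWdef, hEper x, hwper x]
    have hq_c : Continuous (fun x => E x * (deriv w x + 2 * v x * w x)) :=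
      hEc.mul (hw'c.add ((continuous_const.mul hvc).mul hwc))
    have hmEW' : meanT (fun x => E x * (deriv w x + 2 * v x * w x)) = 0 :=
      meanT_deriv_eq_zero hEWd hq_c hEWper
    set c₁ := meanT (fun y => deriv w y + 2 * v y * w y) with hc₁def
    have hD : miuraDeriv v w = fun x => (deriv w x + 2 * v x * w x) - c₁ := by
      funext x; simp only [miuraDeriv, ← hc₁def]
    -- Step 1: Aop E (miuraDeriv v w) = derivative of EW
    have hmED : meanT (fun y => E y * miuraDeriv v w y) = -(c₁ * meanT E) := by
      have : (fun y => E y * miuraDeriv v w y)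
          = fun y => E y * (deriv w y + 2 * v y * w y) - c₁ * E y := by
        funext y; rw [hD]; ring
      rw [this, meanT_sub_mul _ hq_c hEc, hmEW']
      ring
    have hAED : Aop E (miuraDeriv v w) = fun x => E x * (deriv w x + 2 * v x * w x) := by
      funext x
      simp only [Aop]
      rw [hmED]
      simp only [hD]
      field_simp
      ring
    -- Step 2: antiderivT of that is EW - meanT EW
    have hEWc : Continuous EW := hEc.mul hwc
    have hint : ∀ y, (∫ t in (0:ℝ)..y, E t * (deriv w t + 2 * v t * w t)) = EW y - EW 0 := by
      intro y
      exact intervalIntegral.integral_eq_sub_of_hasDerivAt (fun t _ => hEWd t)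
        (hq_c.intervalIntegrable _ _)
    set K := meanT EW with hKdef
    have hanti : antiderivT (fun x => E x * (deriv w x + 2 * v x * w x))
        = fun x => EW x - K := by
      funext x
      unfold antiderivT
      rw [hint x]
      have : (fun y => ∫ t in (0:ℝ)..y, E t * (deriv w t + 2 * v t * w t))
          = fun y => EW y - EW 0 := funext hint
      rw [this, meanT_sub_const _ hEWc, ← hKdef]
      ring
    -- Step 3: Aop F (EW - K) = w
    have hFh : (fun y => F y * (EW y - K)) = fun y => w y - K * F y := by
      funext y
      simp only [hEWdef]
      linear_combination (w y) * hFE y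
    have hmFh : meanT (fun y => F y * (EW y - K)) = -(K * meanT F) := by
      rw [hFh, meanT_sub_mul _ hwc hFc, hwmean]
      ring
    rw [hAED, hanti]
    funext x
    simp only [Aop, hmFh, hEWdef]
    have h2 := hFE x
    have hmFh' : meanT (fun y => F y * (E y * w y - K)) = -(K * meanT F) := hmFh
    field_simp
    linear_combination (w x * meanT F) * h2 - F x * hmFh'
end
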